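/- Fix L : ℕ, finite types C, C̃, C' and finite dimension types d, d'. Let Ω ⊆ C, ε ≥ 0, let ρ : K × K × C → Matrix d d ℂ have all entries positive semidefinite, and let N be a linear map as in the state-level Corollary: positive, total-trace-preserving, commuting with the ideal map R, transcript-local over C, and abort-forcing off Ω (i.e., for every positive-semidefinite-valued input, every c ∉ Ω and (k'_A, k'_B) ≠ (⊥, ⊥), the corresponding output entry is 0). Suppose further there exists a family η : K × K × C × C̃ → Matrix d d ℂ with all entries positive semidefinite such that (i) ∑ c̃ : C̃, η(k_A, k_B, c, c̃) = ρ(k_A, k_B, c) for every (k_A, k_B) and every c ∈ Ω, and (ii) ∑ over (k_A, k_B, c, c̃) of ‖η(k_A, k_B, c, c̃) − (R η)(k_A, k_B, c, c̃)‖₁ ≤ ε. Then ∑ over (k'_A, k'_B, c, c') of ‖(N ρ)(k'_A, k'_B, (c, c')) − (R (N ρ))(k'_A, k'_B, (c, c'))‖₁ ≤ ε. -/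

import Mathlib

/-! The real-minus-ideal output `N ρ - R (N ρ)` equals `N` applied to the `Ω`-restricted
`C̃`-marginal of `η - R η`. On transcripts in `Ω` this follows from locality of `N`, the marginal
condition, and `R` commuting with `N` and with marginals; off `Ω` both sides vanish, because `N`
then outputs only the abort pair `(⊥, ⊥)`, on which `R` acts as the identity.
The composite of `N` with the restricted marginal is positive and trace non-increasing, and such
a map does not increase the summed trace norm of a Hermitian family: write each entry as `P - Q`
with `P, Q ⪰ 0` and `tr P + tr Q = ‖P - Q‖₁`, then use `‖P' - Q'‖₁ ≤ tr P' + tr Q'` for the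
positive images `P', Q'`. -/

open scoped ComplexOrder

/-- The key alphabet: keys of length `l ≤ L`, i.e. pairs of a length `l : Fin (L+1)`
and a bitstring of that length. -/
abbrev Key (L : ℕ) := Σ l : Fin (L+1), (Fin (l : ℕ) → Bool)

/-- The length of a key. -/
def lenKey {L : ℕ} (k : Key L) : Fin (L+1) := k.1

/-- The unique key of length `0` (the abort symbol `⊥`). -/
def botKey (L : ℕ) : Key L := ⟨0, fun _ => false⟩

/-- The ideal-key weight `w(k_A, k_B)`: `2^(-len k_A)` if the lengths agree and
`k_A = k_B`, `0` if the lengths agree but `k_A ≠ k_B`, and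
`2^(-(len k_A + len k_B))` if the lengths differ. -/
noncomputable def idealWt {L : ℕ} (kA kB : Key L) : ℝ :=
  if lenKey kA = lenKey kB then
    (if kA = kB then (2:ℝ) ^ (-((lenKey kA : ℕ) : ℤ)) else 0)
  else (2:ℝ) ^ (-(((lenKey kA : ℕ) : ℤ) + ((lenKey kB : ℕ) : ℤ)))

/-- The ideal map `R`, acting per value of the additional classical index `c`:
it replaces the key registers by ideal keys, weighting by `idealWt` and summing the
input state over all key pairs with the same pair of lengths. -/
noncomputable def idealMap {L : ℕ} {C d : Type*}
    (ρ : Key L × Key L × C → Matrix d d ℂ) : Key L × Key L × C → Matrix d d ℂ :=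
  fun p => idealWt p.1 p.2.1 •
    ∑ q : Key L × Key L,
      if lenKey q.1 = lenKey p.1 ∧ lenKey q.2 = lenKey p.2.1
        then ρ (q.1, q.2, p.2.2) else 0

/-- The trace norm `‖A‖₁` of a complex matrix `A`: the trace of the positive
semidefinite square root of `Aᴴ * A`. -/
noncomputable def traceNorm {n : Type*} [Fintype n] [DecidableEq n] (A : Matrix n n ℂ) : ℝ :=
  ((Matrix.posSemidef_conjTranspose_mul_self A).1.eigenvectorUnitary *
    Matrix.diagonal (fun i => ((Real.sqrt
      ((Matrix.posSemidef_conjTranspose_mul_self A).1.eigenvalues i) : ℝ) : ℂ)) *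
    (star (Matrix.posSemidef_conjTranspose_mul_self A).1.eigenvectorUnitary :
      Matrix n n ℂ)).trace.re

open Matrix

section TraceNorm

variable {n : Type*} [Fintype n] [DecidableEq n] {A : Matrix n n ℂ}

theorem Matrix.IsHermitian.trace_cfc (hA : A.IsHermitian) (f : ℝ → ℝ) :
    (cfc f A).trace = ∑ i, (f (hA.eigenvalues i) : ℂ) := by
  rw [hA.cfc_eq, IsHermitian.cfc, Unitary.conjStarAlgAut_apply, trace_mul_cycle,
    Unitary.coe_star_mul_self, one_mul, trace_diagonal]
  rfl

theorem traceNorm_eq_re_trace_cfc_sqrt (A : Matrix n n ℂ) :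
    traceNorm A = (cfc Real.sqrt (Aᴴ * A)).trace.re := by
  rw [(isHermitian_conjTranspose_mul_self A).cfc_eq, IsHermitian.cfc,
    Unitary.conjStarAlgAut_apply]
  rfl

theorem Matrix.IsHermitian.traceNorm_eq_sum_abs_eigenvalues (hA : A.IsHermitian) :
    traceNorm A = ∑ i, |hA.eigenvalues i| := by
  have hsq : Aᴴ * A = cfc (fun x : ℝ => x * x) A := by
    rw [hA.eq, cfc_mul .., cfc_id' ..]
  rw [traceNorm_eq_re_trace_cfc_sqrt, hsq, ← cfc_comp' ..,
    cfc_congr fun x _ => Real.sqrt_mul_self_eq_abs x, hA.trace_cfc, Complex.re_sum]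
  rfl

theorem Matrix.IsHermitian.exists_posSemidef_sub_eq (hA : A.IsHermitian) :
    ∃ P Q : Matrix n n ℂ, P.PosSemidef ∧ Q.PosSemidef ∧ A = P - Q ∧
      P.trace.re + Q.trace.re = traceNorm A := by
  open scoped MatrixOrder in
  refine ⟨cfc (fun x : ℝ => max x 0) A, cfc (fun x : ℝ => max (-x) 0) A,
    nonneg_iff_posSemidef.mp (cfc_nonneg fun x _ => le_max_right x 0),
    nonneg_iff_posSemidef.mp (cfc_nonneg fun x _ => le_max_right (-x) 0), ?_, ?_⟩
  · conv_lhs => rw [← cfc_id' ℝ A]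
    rw [← cfc_sub ..]
    exact cfc_congr fun x _ => (max_zero_sub_max_neg_zero_eq_self x).symm
  · rw [hA.traceNorm_eq_sum_abs_eigenvalues, hA.trace_cfc, hA.trace_cfc, ← Complex.add_re,
      ← Finset.sum_add_distrib]
    simp only [← Complex.ofReal_add, max_zero_add_max_neg_zero_eq_abs_self, Complex.re_sum,
      Complex.ofReal_re]

theorem Matrix.PosSemidef.traceNorm_sub_le {P Q : Matrix n n ℂ} (hP : P.PosSemidef)
    (hQ : Q.PosSemidef) : traceNorm (P - Q) ≤ P.trace.re + Q.trace.re := by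
  have hX : (P - Q).IsHermitian := hP.1.sub hQ.1
  set U := (hX.eigenvectorUnitary : Matrix n n ℂ)
  have htrace (M : Matrix n n ℂ) : (star U * M * U).trace = M.trace := by
    rw [trace_mul_cycle, mem_unitaryGroup_iff.mp hX.eigenvectorUnitary.2, one_mul]
  have hdiag_nonneg {M : Matrix n n ℂ} (hM : M.PosSemidef) (i : n) :
      0 ≤ ((star U * M * U) i i).re := by
    have hMc : (star U * M * U).PosSemidef := by
      simpa [star_eq_conjTranspose] using hM.conjTranspose_mul_mul_same U
    exact (Complex.nonneg_iff.mp hMc.diag_nonneg).1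
  have hdiag : star U * P * U - star U * Q * U = diagonal (RCLike.ofReal ∘ hX.eigenvalues) := by
    rw [← hX.conjStarAlgAut_star_eigenvectorUnitary, Unitary.conjStarAlgAut_star_apply,
      mul_sub, sub_mul]
  have heig (i : n) :
      hX.eigenvalues i = ((star U * P * U) i i).re - ((star U * Q * U) i i).re := by
    simpa using congr(($hdiag i i).re).symm
  rw [hX.traceNorm_eq_sum_abs_eigenvalues, ← htrace P, ← htrace Q, trace, trace, Complex.re_sum,
    Complex.re_sum, ← Finset.sum_add_distrib]
  gcongr with i
  have hp := hdiag_nonneg hP i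
  have hq := hdiag_nonneg hQ i
  rw [heig, diag_apply, diag_apply, abs_sub_le_iff]
  constructor <;> linarith

theorem sum_traceNorm_map_le {ι κ m : Type*} [Fintype ι] [Fintype κ] [Fintype m] [DecidableEq m]
    (M : (ι → Matrix n n ℂ) →ₗ[ℂ] (κ → Matrix m m ℂ))
    (hpos : ∀ σ, (∀ i, (σ i).PosSemidef) → ∀ j, (M σ j).PosSemidef)
    (htr : ∀ σ, (∀ i, (σ i).PosSemidef) → ∑ j, (M σ j).trace.re ≤ ∑ i, (σ i).trace.re)
    {X : ι → Matrix n n ℂ} (hX : ∀ i, (X i).IsHermitian) :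
    ∑ j, traceNorm (M X j) ≤ ∑ i, traceNorm (X i) := by
  choose P Q hP hQ hPQ htrPQ using fun i => (hX i).exists_posSemidef_sub_eq
  calc ∑ j, traceNorm (M X j) = ∑ j, traceNorm (M P j - M Q j) := by
        rw [show X = P - Q from funext hPQ, map_sub]
        rfl
    _ ≤ ∑ j, ((M P j).trace.re + (M Q j).trace.re) :=
        Finset.sum_le_sum fun j _ => (hpos P hP j).traceNorm_sub_le (hpos Q hQ j)
    _ ≤ ∑ i, ((P i).trace.re + (Q i).trace.re) := by
        simpa only [Finset.sum_add_distrib] using add_le_add (htr P hP) (htr Q hQ)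
    _ = ∑ i, traceNorm (X i) := Finset.sum_congr rfl fun i _ => htrPQ i

end TraceNorm

section Marginal

variable {α β C Ct : Type*} [Fintype Ct] (R : Type*) {M : Type*} [Semiring R]
  [AddCommMonoid M] [Module R M] (Ω : Set C) [DecidablePred (· ∈ Ω)]

def marginalOn : (α × β × (C × Ct) → M) →ₗ[R] (α × β × C → M) where
  toFun Y p := if p.2.2 ∈ Ω then ∑ ct, Y (p.1, p.2.1, (p.2.2, ct)) else 0
  map_add' Y Z := by
    funext p
    split_ifs <;> simp [Finset.sum_add_distrib, *]
  map_smul' r Y := by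
    funext p
    split_ifs <;> simp [Finset.smul_sum, *]

variable {R Ω}

theorem marginalOn_apply_of_mem (Y : α × β × (C × Ct) → M) {a : α} {b : β} {c : C}
    (hc : c ∈ Ω) : marginalOn R Ω Y (a, b, c) = ∑ ct, Y (a, b, (c, ct)) :=
  if_pos hc

theorem marginalOn_apply_of_notMem (Y : α × β × (C × Ct) → M) {a : α} {b : β} {c : C}
    (hc : c ∉ Ω) : marginalOn R Ω Y (a, b, c) = 0 :=
  if_neg hc

variable {d : Type*} {Y : α × β × (C × Ct) → Matrix d d ℂ}

theorem posSemidef_marginalOn (hY : ∀ p, (Y p).PosSemidef) (p : α × β × C) :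
    (marginalOn ℂ Ω Y p).PosSemidef := by
  obtain ⟨a, b, c⟩ := p
  by_cases hc : c ∈ Ω
  · rw [marginalOn_apply_of_mem _ hc]
    exact posSemidef_sum _ fun ct _ => hY _
  · rw [marginalOn_apply_of_notMem _ hc]
    exact .zero

theorem sum_re_trace_marginalOn_le [Fintype α] [Fintype β] [Fintype C] [Fintype d]
    (hY : ∀ p, (Y p).PosSemidef) :
    ∑ p, (marginalOn ℂ Ω Y p).trace.re ≤ ∑ p, (Y p).trace.re := by
  simp only [Fintype.sum_prod_type]
  gcongr with a _ b _ c
  by_cases hc : c ∈ Ω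
  · rw [marginalOn_apply_of_mem _ hc, trace_sum, Complex.re_sum]
  · rw [marginalOn_apply_of_notMem _ hc, trace_zero, Complex.zero_re]
    exact Finset.sum_nonneg fun ct _ => (Complex.nonneg_iff.mp (hY _).trace_nonneg).1

end Marginal

section IdealMap

variable {L : ℕ}

theorem eq_botKey_of_lenKey_eq_zero {k : Key L} (h : lenKey k = 0) : k = botKey L := by
  obtain ⟨l, s⟩ := k
  obtain rfl : l = 0 := h
  exact Sigma.ext rfl (heq_of_eq (funext fun i => absurd i.2 (Nat.not_lt_zero _)))

theorem idealWt_nonneg (kA kB : Key L) : 0 ≤ idealWt kA kB := by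
  unfold idealWt
  split_ifs <;> positivity

theorem idealWt_botKey : idealWt (botKey L) (botKey L) = 1 := by
  simp [idealWt, lenKey, botKey]

variable {X d : Type*}

theorem posSemidef_idealMap {σ : Key L × Key L × X → Matrix d d ℂ}
    (hσ : ∀ p, (σ p).PosSemidef) (p : Key L × Key L × X) : (idealMap σ p).PosSemidef :=
  (posSemidef_sum _ fun q _ => by split_ifs <;> simp [hσ, PosSemidef.zero]).smul
    (idealWt_nonneg _ _)

theorem idealMap_apply_congr {σ τ : Key L × Key L × X → Matrix d d ℂ} {x : X}
    (h : ∀ kA kB, σ (kA, kB, x) = τ (kA, kB, x)) (kA kB : Key L) :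
    idealMap σ (kA, kB, x) = idealMap τ (kA, kB, x) := by
  simp only [idealMap, h]

theorem idealMap_apply_eq_self_of_supported_botKey {σ : Key L × Key L × X → Matrix d d ℂ}
    {x : X} (hσ : ∀ kA kB, (kA, kB) ≠ (botKey L, botKey L) → σ (kA, kB, x) = 0)
    (kA kB : Key L) : idealMap σ (kA, kB, x) = σ (kA, kB, x) := by
  rw [idealMap, Finset.sum_eq_single (botKey L, botKey L)
    (fun q _ hq => by simp [hσ q.1 q.2 hq]) (by simp)]
  by_cases hk : (kA, kB) = (botKey L, botKey L)
  · obtain ⟨rfl, rfl⟩ := Prod.mk.inj hk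
    simp [idealWt_botKey]
  · rw [hσ kA kB hk, if_neg, smul_zero]
    rintro ⟨hA, hB⟩
    exact hk (Prod.ext (eq_botKey_of_lenKey_eq_zero hA.symm) (eq_botKey_of_lenKey_eq_zero hB.symm))

theorem idealMap_marginalOn {Ct : Type*} [Fintype Ct] (Ω : Set X) [DecidablePred (· ∈ Ω)]
    (Y : Key L × Key L × (X × Ct) → Matrix d d ℂ) :
    idealMap (marginalOn ℂ Ω Y) = marginalOn ℂ Ω (idealMap Y) := by
  funext ⟨kA, kB, x⟩
  by_cases hx : x ∈ Ω
  · simp only [idealMap, marginalOn_apply_of_mem _ hx, ← Finset.smul_sum]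
    rw [Finset.sum_comm]
    refine congrArg _ (Finset.sum_congr rfl fun q _ => ?_)
    split_ifs <;> simp
  · simp [idealMap, marginalOn_apply_of_notMem _ hx]

end IdealMap

theorem qkd_security_reduction_general (L : ℕ) (C Ct C' d d' : Type*)
    [Fintype C] [Fintype Ct] [Fintype C']
    [Fintype d] [DecidableEq d] [Fintype d'] [DecidableEq d']
    (Ω : Set C) [DecidablePred (· ∈ Ω)] (ε : ℝ)
    (ρ : Key L × Key L × C → Matrix d d ℂ)
    (hρ : ∀ p, (ρ p).PosSemidef)
    (N : (Key L × Key L × C → Matrix d d ℂ) →ₗ[ℂ]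
          (Key L × Key L × (C × C') → Matrix d' d' ℂ))
    (hpos : ∀ σ : Key L × Key L × C → Matrix d d ℂ,
        (∀ p, (σ p).PosSemidef) → ∀ p, ((N σ) p).PosSemidef)
    (htr : ∀ σ : Key L × Key L × C → Matrix d d ℂ,
        ∑ p : Key L × Key L × (C × C'), ((N σ) p).trace =
          ∑ p : Key L × Key L × C, (σ p).trace)
    (hcomm : ∀ σ : Key L × Key L × C → Matrix d d ℂ,
        N (idealMap σ) = idealMap (N σ))
    (hlocal : ∀ c : C, ∃ Nc : (Key L × Key L → Matrix d d ℂ) →ₗ[ℂ]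
          (Key L × Key L × C' → Matrix d' d' ℂ),
        ∀ (σ : Key L × Key L × C → Matrix d d ℂ) (kA' kB' : Key L) (c' : C'),
          (N σ) (kA', kB', (c, c')) = Nc (fun q => σ (q.1, q.2, c)) (kA', kB', c'))
    (habort : ∀ σ : Key L × Key L × C → Matrix d d ℂ,
        (∀ p, (σ p).PosSemidef) → ∀ c : C, c ∉ Ω → ∀ (c' : C') (kA' kB' : Key L),
          (kA', kB') ≠ (botKey L, botKey L) → (N σ) (kA', kB', (c, c')) = 0)
    (η : Key L × Key L × (C × Ct) → Matrix d d ℂ)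
    (hη : ∀ p, (η p).PosSemidef)
    (hmarg : ∀ (kA kB : Key L) (c : C), c ∈ Ω →
        ∑ ct : Ct, η (kA, kB, (c, ct)) = ρ (kA, kB, c))
    (hdist : ∑ p : Key L × Key L × (C × Ct),
        traceNorm (η p - idealMap η p) ≤ ε) :
    ∑ p : Key L × Key L × (C × C'),
        traceNorm ((N ρ) p - idealMap (N ρ) p) ≤ ε := by
  have hN_eq_on_Ω : ∀ c ∈ Ω, ∀ kA kB c',
      N ρ (kA, kB, (c, c')) = N (marginalOn ℂ Ω η) (kA, kB, (c, c')) := by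
    intro c hc kA kB c'
    obtain ⟨Nc, hNc⟩ := hlocal c
    simp only [hNc, marginalOn_apply_of_mem _ hc, hmarg _ _ c hc]
  have hN_abort : ∀ σ, (∀ p, (σ p).PosSemidef) → ∀ c ∉ Ω, ∀ kA kB c',
      idealMap (N σ) (kA, kB, (c, c')) = N σ (kA, kB, (c, c')) := fun σ hσ c hc kA kB c' =>
    idealMap_apply_eq_self_of_supported_botKey (fun kA kB => habort σ hσ c hc c' kA kB) kA kB
  have hreal_ideal : N ρ - idealMap (N ρ) = (N ∘ₗ marginalOn ℂ Ω) (η - idealMap η) := by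
    rw [LinearMap.comp_apply, map_sub, ← idealMap_marginalOn, map_sub, hcomm]
    funext ⟨kA, kB, c, c'⟩
    by_cases hc : c ∈ Ω
    · rw [Pi.sub_apply, Pi.sub_apply, hN_eq_on_Ω c hc,
        idealMap_apply_congr (fun kA kB => hN_eq_on_Ω c hc kA kB c')]
    · rw [Pi.sub_apply, Pi.sub_apply, hN_abort ρ hρ c hc,
        hN_abort _ (posSemidef_marginalOn hη) c hc, sub_self, sub_self]
  have hN_trace : ∀ σ, ∑ p, (N σ p).trace.re = ∑ p, (σ p).trace.re := fun σ => by
    simp only [← Complex.re_sum, htr]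
  have hcontract := sum_traceNorm_map_le (N ∘ₗ marginalOn ℂ Ω)
    (fun σ hσ => hpos _ (posSemidef_marginalOn hσ))
    (fun σ hσ => (hN_trace _).trans_le (sum_re_trace_marginalOn_le hσ))
    (X := η - idealMap η) (fun p => (hη p).1.sub (posSemidef_idealMap hη p).1)
  rw [← hreal_ideal] at hcontract
  exact hcontract.trans hdist

/-- State-level form of the main reduction theorem: if the practical-setting output
state `ρ`, restricted to the honest-authentication event `Ω`, is the marginal of a
virtual/honest-setting state `η` whose real–ideal trace distance is at most `ε`, then
after the authentication post-processing channel `N` (positive, total-trace-preserving,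
commuting with the ideal map, transcript-local, and abort-forcing off `Ω`) the
real–ideal trace distance of the full protocol output is at most `ε`. -/
theorem qkd_security_reduction (L : ℕ) (C Ct C' d d' : Type*)
    [Fintype C] [Fintype Ct] [Fintype C']
    [Fintype d] [DecidableEq d] [Fintype d'] [DecidableEq d']
    (Ω : Set C) [DecidablePred (· ∈ Ω)] (ε : ℝ) (hε : 0 ≤ ε)
    (ρ : Key L × Key L × C → Matrix d d ℂ)
    (hρ : ∀ p, (ρ p).PosSemidef)
    (N : (Key L × Key L × C → Matrix d d ℂ) →ₗ[ℂ]
          (Key L × Key L × (C × C') → Matrix d' d' ℂ))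
    (hpos : ∀ σ : Key L × Key L × C → Matrix d d ℂ,
        (∀ p, (σ p).PosSemidef) → ∀ p, ((N σ) p).PosSemidef)
    (htr : ∀ σ : Key L × Key L × C → Matrix d d ℂ,
        ∑ p : Key L × Key L × (C × C'), ((N σ) p).trace =
          ∑ p : Key L × Key L × C, (σ p).trace)
    (hcomm : ∀ σ : Key L × Key L × C → Matrix d d ℂ,
        N (idealMap σ) = idealMap (N σ))
    (hlocal : ∀ c : C, ∃ Nc : (Key L × Key L → Matrix d d ℂ) →ₗ[ℂ]
          (Key L × Key L × C' → Matrix d' d' ℂ),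
        ∀ (σ : Key L × Key L × C → Matrix d d ℂ) (kA' kB' : Key L) (c' : C'),
          (N σ) (kA', kB', (c, c')) = Nc (fun q => σ (q.1, q.2, c)) (kA', kB', c'))
    (habort : ∀ σ : Key L × Key L × C → Matrix d d ℂ,
        (∀ p, (σ p).PosSemidef) → ∀ c : C, c ∉ Ω → ∀ (c' : C') (kA' kB' : Key L),
          (kA', kB') ≠ (botKey L, botKey L) → (N σ) (kA', kB', (c, c')) = 0)
    (η : Key L × Key L × (C × Ct) → Matrix d d ℂ)
    (hη : ∀ p, (η p).PosSemidef)
    (hmarg : ∀ (kA kB : Key L) (c : C), c ∈ Ω →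
        ∑ ct : Ct, η (kA, kB, (c, ct)) = ρ (kA, kB, c))
    (hdist : ∑ p : Key L × Key L × (C × Ct),
        traceNorm (η p - idealMap η p) ≤ ε) :
    ∑ p : Key L × Key L × (C × C'),
        traceNorm ((N ρ) p - idealMap (N ρ) p) ≤ ε :=
  qkd_security_reduction_general L C Ct C' d d' Ω ε ρ hρ N hpos htr hcomm hlocal habort η hη hmarg
    hdist
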